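/- Let γ : ℝ → ℝ³ be a unit speed spherical curve with constant nonzero geodesic curvature k_g, let b ≠ 0, b₁, b₂ ≠ 0 be real constants and a ∈ ℝ³. Then the curve c(s) = b ∫ b₂ cos(k_g (s − b₁)) γ(s) ds + a (i.e. c'(s) = b b₂ cos(k_g(s − b₁)) γ(s)) lies on a sphere of radius |b b₂|: there exists m ∈ ℝ³ with ‖c(s) − m‖ = |b b₂| for all s in an interval where cos(k_g(s − b₁)) ≠ 0. -/

import Mathlib

noncomputable section

/-- ℝ³ as a Euclidean space. -/
abbrev E3 : Type := EuclideanSpace ℝ (Fin 3)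

/-- The cross product on ℝ³. -/
def cross3 (u v : E3) : E3 :=
  (WithLp.equiv 2 (Fin 3 → ℝ)).symm
    (crossProduct ((WithLp.equiv 2 (Fin 3 → ℝ)) u) ((WithLp.equiv 2 (Fin 3 → ℝ)) v))

/-- The (real) inner product on ℝ³. -/
def inner3 (u v : E3) : ℝ := inner ℝ u v

/-- The speed ν of a curve. -/
def speed (c : ℝ → E3) (s : ℝ) : ℝ := ‖deriv c s‖

/-- The curvature κ of a curve. -/
def curvature (c : ℝ → E3) (s : ℝ) : ℝ :=
  ‖cross3 (deriv c s) (deriv (deriv c) s)‖ / ‖deriv c s‖ ^ 3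

/-- The torsion τ of a curve. -/
def torsion (c : ℝ → E3) (s : ℝ) : ℝ :=
  inner3 (cross3 (deriv c s) (deriv (deriv c) s)) (deriv (deriv (deriv c)) s) /
    ‖cross3 (deriv c s) (deriv (deriv c) s)‖ ^ 2

/-- σ(s) = (κ²/(ν (κ² + τ²)^{3/2}))·(τ/κ)'(s), the geodesic curvature of the spherical
image of the principal normal indicatrix. -/
def sigmaOf (c : ℝ → E3) (s : ℝ) : ℝ :=
  (curvature c s) ^ 2 / (speed c s * ((curvature c s) ^ 2 + (torsion c s) ^ 2) ^ ((3 : ℝ) / 2)) *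
    deriv (fun t => torsion c t / curvature c t) s

/-- The geodesic curvature k_g(s) = det(γ(s), γ'(s), γ''(s)) = ⟨γ(s) × γ'(s), γ''(s)⟩ of a
unit speed spherical curve γ. -/
def kgOf (γ : ℝ → E3) (s : ℝ) : ℝ :=
  inner3 (cross3 (γ s) (deriv γ s)) (deriv (deriv γ) s)

/-- Build a vector in ℝ³ from coordinates. -/
def mk3 (x y z : ℝ) : E3 := (WithLp.equiv 2 (Fin 3 → ℝ)).symm ![x, y, z]

end

noncomputable section Aux

lemma cross3_add_left (u u' v : E3) : cross3 (u + u') v = cross3 u v + cross3 u' v := by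
  simp [cross3, map_add, LinearMap.add_apply]

lemma cross3_smul_left (a : ℝ) (u v : E3) : cross3 (a • u) v = a • cross3 u v := by
  simp [cross3]

lemma cross3_add_right (u v v' : E3) : cross3 u (v + v') = cross3 u v + cross3 u v' := by
  simp [cross3]

lemma cross3_smul_right (a : ℝ) (u v : E3) : cross3 u (a • v) = a • cross3 u v := by
  simp [cross3]

lemma cross3_self (u : E3) : cross3 u u = 0 := by
  simp [cross3, cross_self]

/-- cross3 as a bilinear map. -/
def crossL : E3 →ₗ[ℝ] E3 →ₗ[ℝ] E3 :=
  LinearMap.mk₂ ℝ cross3 cross3_add_left cross3_smul_left cross3_add_right cross3_smul_right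

/-- cross3 as a continuous bilinear map. -/
def crossCLM : E3 →L[ℝ] E3 →L[ℝ] E3 :=
  LinearMap.toContinuousLinearMap
    { toFun := fun u => LinearMap.toContinuousLinearMap (crossL u)
      map_add' := by intro x y; ext z; simp [crossL]
      map_smul' := by intro a x; ext z; simp [crossL] }

lemma crossCLM_apply (u v : E3) : crossCLM u v = cross3 u v := rfl

lemma hasDerivAt_cross {f g : ℝ → E3} {f' g' : E3} {s : ℝ}
    (hf : HasDerivAt f f' s) (hg : HasDerivAt g g' s) :
    HasDerivAt (fun t => cross3 (f t) (g t)) (cross3 f' (g s) + cross3 (f s) g') s := by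
  have h1 : HasDerivAt (fun t => crossCLM (f t)) (crossCLM f') s :=
    crossCLM.hasFDerivAt.comp_hasDerivAt s hf
  simpa [crossCLM_apply] using h1.clm_apply hg

lemma inner_cross_left (u v : E3) : (inner ℝ (cross3 u v) u : ℝ) = 0 := by
  simp [PiLp.inner_apply, cross3, crossProduct, Fin.sum_univ_three]; ring

lemma inner_cross_right (u v : E3) : (inner ℝ (cross3 u v) v : ℝ) = 0 := by
  simp [PiLp.inner_apply, cross3, crossProduct, Fin.sum_univ_three]; ring

lemma lagrange_expand (u v w : E3) :
    ((inner ℝ u u : ℝ) * (inner ℝ v v : ℝ) - (inner ℝ u v : ℝ) ^ 2) • w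
      = ((inner ℝ v v : ℝ) * (inner ℝ u w : ℝ) - (inner ℝ u v : ℝ) * (inner ℝ v w : ℝ)) • u
        + ((inner ℝ u u : ℝ) * (inner ℝ v w : ℝ) - (inner ℝ u v : ℝ) * (inner ℝ u w : ℝ)) • v
        + (inner ℝ (cross3 u v) w : ℝ) • cross3 u v := by
  apply (WithLp.equiv 2 (Fin 3 → ℝ)).injective
  funext i
  fin_cases i <;>
    simp [-inner_self_eq_norm_sq_to_K, PiLp.inner_apply, cross3, crossProduct, Fin.sum_univ_three] <;> ring

lemma expand3 (u v w : E3) (a bb cc : ℝ)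
    (hu : (inner ℝ u u : ℝ) = 1) (hv : (inner ℝ v v : ℝ) = 1) (huv : (inner ℝ u v : ℝ) = 0)
    (ha : (inner ℝ u w : ℝ) = a) (hb : (inner ℝ v w : ℝ) = bb)
    (hc : (inner ℝ (cross3 u v) w : ℝ) = cc) :
    w = a • u + bb • v + cc • cross3 u v := by
  have h := lagrange_expand u v w
  rw [hu, hv, huv, ha, hb, hc] at h
  simpa using h

lemma cross_cross_self (u v : E3) :
    cross3 u (cross3 u v) = (inner ℝ u v : ℝ) • u - (inner ℝ u u : ℝ) • v := by
  apply (WithLp.equiv 2 (Fin 3 → ℝ)).injective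
  funext i
  fin_cases i <;>
    simp [-inner_self_eq_norm_sq_to_K, PiLp.inner_apply, cross3, crossProduct, Fin.sum_univ_three] <;> ring

end Aux


/-- If γ is a unit-speed circle on the unit sphere with constant nonzero
geodesic curvature k_g, and c' = b b₂ cos(k_g(s − b₁)) γ, then c lies on a sphere of
radius |b b₂| on any interval where cos(k_g(s − b₁)) ≠ 0. -/
theorem curve_lies_on_sphere_of_radius
    (γ : ℝ → E3) (hγ : ContDiff ℝ (⊤ : ℕ∞) γ)
    (hsph : ∀ s, ‖γ s‖ = 1) (hunit : ∀ s, ‖deriv γ s‖ = 1)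
    (kg : ℝ) (hkg : kg ≠ 0) (hkgconst : ∀ s, kgOf γ s = kg)
    (b b₁ b₂ : ℝ) (hb : b ≠ 0) (hb₂ : b₂ ≠ 0)
    (c : ℝ → E3)
    (hc : ∀ s, HasDerivAt c ((b * b₂ * Real.cos (kg * (s - b₁))) • γ s) s)
    (I : Set ℝ) (hIne : I.Nonempty) (hIopen : IsOpen I) (hIconn : I.OrdConnected)
    (hcos : ∀ s ∈ I, Real.cos (kg * (s - b₁)) ≠ 0) :
    ∃ m : E3, ∀ s ∈ I, ‖c s - m‖ = |b * b₂| := by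
  -- basic differentiability
  have hγd : ∀ s, HasDerivAt γ (deriv γ s) s :=
    fun s => (hγ.differentiable (by simp) s).hasDerivAt
  have hgi : ContDiff ℝ ((⊤:ℕ∞) : WithTop ℕ∞) γ := hγ.of_le (by simp)
  have hγ' : ContDiff ℝ ((⊤:ℕ∞) : WithTop ℕ∞) (deriv γ) := (contDiff_infty_iff_deriv.mp hgi).2
  have hγdd : ∀ s, HasDerivAt (deriv γ) (deriv (deriv γ) s) s :=
    fun s => (hγ'.differentiable (by simp) s).hasDerivAt
  -- inner product identities
  have hγγ : ∀ s, (inner ℝ (γ s) (γ s) : ℝ) = 1 := by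
    intro s
    rw [real_inner_self_eq_norm_sq, hsph s]; norm_num
  have hTT : ∀ s, (inner ℝ (deriv γ s) (deriv γ s) : ℝ) = 1 := by
    intro s
    rw [real_inner_self_eq_norm_sq, hunit s]; norm_num
  have hγT : ∀ s, (inner ℝ (γ s) (deriv γ s) : ℝ) = 0 := by
    intro s
    have h1 : HasDerivAt (fun t => (inner ℝ (γ t) (γ t) : ℝ))
        ((inner ℝ (γ s) (deriv γ s) : ℝ) + (inner ℝ (deriv γ s) (γ s) : ℝ)) s :=
      (hγd s).inner ℝ (hγd s)
    have h2 : HasDerivAt (fun t => (inner ℝ (γ t) (γ t) : ℝ)) 0 s := by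
      have : (fun t => (inner ℝ (γ t) (γ t) : ℝ)) = fun _ => (1 : ℝ) := funext hγγ
      rw [this]; exact hasDerivAt_const s 1
    have h3 := h1.unique h2
    have h4 : (inner ℝ (deriv γ s) (γ s) : ℝ) = inner ℝ (γ s) (deriv γ s) := real_inner_comm _ _
    linarith
  have hTdd : ∀ s, (inner ℝ (deriv γ s) (deriv (deriv γ) s) : ℝ) = 0 := by
    intro s
    have h1 : HasDerivAt (fun t => (inner ℝ (deriv γ t) (deriv γ t) : ℝ))
        ((inner ℝ (deriv γ s) (deriv (deriv γ) s) : ℝ)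
          + (inner ℝ (deriv (deriv γ) s) (deriv γ s) : ℝ)) s :=
      (hγdd s).inner ℝ (hγdd s)
    have h2 : HasDerivAt (fun t => (inner ℝ (deriv γ t) (deriv γ t) : ℝ)) 0 s := by
      have : (fun t => (inner ℝ (deriv γ t) (deriv γ t) : ℝ)) = fun _ => (1 : ℝ) := funext hTT
      rw [this]; exact hasDerivAt_const s 1
    have h3 := h1.unique h2
    have h4 : (inner ℝ (deriv (deriv γ) s) (deriv γ s) : ℝ)
        = inner ℝ (deriv γ s) (deriv (deriv γ) s) := real_inner_comm _ _
    linarith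
  have hγdd' : ∀ s, (inner ℝ (γ s) (deriv (deriv γ) s) : ℝ) = -1 := by
    intro s
    have h1 : HasDerivAt (fun t => (inner ℝ (γ t) (deriv γ t) : ℝ))
        ((inner ℝ (γ s) (deriv (deriv γ) s) : ℝ) + (inner ℝ (deriv γ s) (deriv γ s) : ℝ)) s :=
      (hγd s).inner ℝ (hγdd s)
    have h2 : HasDerivAt (fun t => (inner ℝ (γ t) (deriv γ t) : ℝ)) 0 s := by
      have : (fun t => (inner ℝ (γ t) (deriv γ t) : ℝ)) = fun _ => (0 : ℝ) := funext hγT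
      rw [this]; exact hasDerivAt_const s 0
    have h3 := h1.unique h2
    rw [hTT s] at h3
    linarith
  -- the structural equation γ'' = -γ + kg • (γ × γ')
  set N : ℝ → E3 := fun s => cross3 (γ s) (deriv γ s) with hN
  have hstruct : ∀ s, deriv (deriv γ) s = (-1 : ℝ) • γ s + (0 : ℝ) • deriv γ s + kg • N s := by
    intro s
    refine expand3 (γ s) (deriv γ s) (deriv (deriv γ) s) (-1) 0 kg (hγγ s) (hTT s) (hγT s)
      (hγdd' s) (hTdd s) ?_
    exact hkgconst s
  -- derivative of N
  have hNd : ∀ s, HasDerivAt N (-(kg • deriv γ s)) s := by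
    intro s
    have h := hasDerivAt_cross (hγd s) (hγdd s)
    have hself : cross3 (deriv γ s) (deriv γ s) = 0 := cross3_self _
    have hγN : cross3 (γ s) (deriv (deriv γ) s) = -(kg • deriv γ s) := by
      have hccs := cross_cross_self (γ s) (deriv γ s)
      rw [hγT s, hγγ s] at hccs
      rw [hstruct s]
      simp only [hN]
      rw [cross3_add_right, cross3_add_right, cross3_smul_right, cross3_smul_right,
        cross3_smul_right, cross3_self, hccs]
      module
    rw [hself, hγN] at h
    simpa using h
  -- the center function
  set θ : ℝ → ℝ := fun s => kg * (s - b₁) with hθ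
  set f : ℝ → E3 := fun s =>
    c s + (b * b₂ * Real.cos (θ s)) • deriv γ s - (b * b₂ * Real.sin (θ s)) • N s with hf
  have hθd : ∀ s, HasDerivAt θ kg s := by
    intro s
    simpa using ((hasDerivAt_id s).sub_const b₁).const_mul kg
  have hfd : ∀ s, HasDerivAt f 0 s := by
    intro s
    have hcosd : HasDerivAt (fun t => b * b₂ * Real.cos (θ t))
        (b * b₂ * (-Real.sin (θ s) * kg)) s := ((hθd s).cos).const_mul (b * b₂)
    have hsind : HasDerivAt (fun t => b * b₂ * Real.sin (θ t))
        (b * b₂ * (Real.cos (θ s) * kg)) s := ((hθd s).sin).const_mul (b * b₂)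
    have h1 : HasDerivAt (fun t => (b * b₂ * Real.cos (θ t)) • deriv γ t)
        ((b * b₂ * Real.cos (θ s)) • deriv (deriv γ) s
          + (b * b₂ * (-Real.sin (θ s) * kg)) • deriv γ s) s := hcosd.smul (hγdd s)
    have h2 : HasDerivAt (fun t => (b * b₂ * Real.sin (θ t)) • N t)
        ((b * b₂ * Real.sin (θ s)) • (-(kg • deriv γ s))
          + (b * b₂ * (Real.cos (θ s) * kg)) • N s) s := hsind.smul (hNd s)
    have h := ((hc s).add h1).sub h2
    refine h.congr_deriv ?_
    rw [hstruct s]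
    module
  have hfconst : ∀ s t : ℝ, f s = f t := by
    intro s t
    exact is_const_of_deriv_eq_zero (fun x => (hfd x).differentiableAt)
      (fun x => (hfd x).deriv) s t
  refine ⟨f 0, fun s _ => ?_⟩
  have hcm : c s - f 0 = -((b * b₂ * Real.cos (θ s)) • deriv γ s)
      + (b * b₂ * Real.sin (θ s)) • N s := by
    rw [← hfconst s 0]
    simp [hf]
    abel
  have hNN : (inner ℝ (N s) (N s) : ℝ) = 1 := by
    have h := lagrange_expand (γ s) (deriv γ s) (N s)
    -- simpler: use coordinates lemma
    have : (inner ℝ (cross3 (γ s) (deriv γ s)) (cross3 (γ s) (deriv γ s)) : ℝ)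
        = (inner ℝ (γ s) (γ s) : ℝ) * (inner ℝ (deriv γ s) (deriv γ s) : ℝ)
          - (inner ℝ (γ s) (deriv γ s) : ℝ) ^ 2 := by
      simp [-inner_self_eq_norm_sq_to_K, PiLp.inner_apply, cross3, crossProduct, Fin.sum_univ_three]; ring
    rw [hN]
    rw [this, hγγ s, hTT s, hγT s]; ring
  have hTN : (inner ℝ (deriv γ s) (N s) : ℝ) = 0 := by
    rw [hN, real_inner_comm]
    exact inner_cross_right _ _
  have hNnorm : ‖N s‖ = 1 := by
    have h1 : ‖N s‖ ^ 2 = 1 := by rw [← real_inner_self_eq_norm_sq, hNN]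
    nlinarith [norm_nonneg (N s)]
  have hx : ‖c s - f 0‖ ^ 2 = (b * b₂ * Real.cos (θ s)) ^ 2 + (b * b₂ * Real.sin (θ s)) ^ 2 := by
    rw [hcm, norm_add_sq_real]
    have h1 : (inner ℝ (-((b * b₂ * Real.cos (θ s)) • deriv γ s))
        ((b * b₂ * Real.sin (θ s)) • N s) : ℝ) = 0 := by
      rw [inner_neg_left, real_inner_smul_left, real_inner_smul_right, hTN]; ring
    rw [h1, norm_neg, norm_smul, norm_smul, hunit s, hNnorm]
    simp only [Real.norm_eq_abs, abs_mul, mul_one, mul_pow, sq_abs]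
    ring
  have hx2 : ‖c s - f 0‖ ^ 2 = (b * b₂) ^ 2 := by
    rw [hx]
    have := Real.sin_sq_add_cos_sq (θ s)
    nlinarith [this]
  have h2 : ‖c s - f 0‖ = Real.sqrt ((b * b₂) ^ 2) := by
    rw [← hx2, Real.sqrt_sq (norm_nonneg _)]
  rw [h2, Real.sqrt_sq_eq_abs]
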